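/- arXiv:2304.00488 — 6 statements merged into one kernel-verified Lean document; each statement's English description precedes it below -/
import Mathlib

section
/- The map g: (u,v) ↦ (u ⊙ v, √((u² − v²)/2)) from {(u,v) ∈ ℝ^d × ℝ^d : u > |v| coordinatewise} to ℝ^d × ℝ_{>0}^d is a bijection, with inverse g^{-1}(β, α) = (√(α² + √(β² + α⁴)), sign(β) ⊙ √(−α² + √(β² + α⁴))), where all operations (squares, square roots, sign) are applied coordinatewise. -/
lemma sign_mul_abs' (x : ℝ) : Real.sign x * |x| = x := by
  rcases lt_trichotomy x 0 with h | h | h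
  · rw [Real.sign_of_neg h, abs_of_neg h]; ring
  · simp [h]
  · rw [Real.sign_of_pos h, abs_of_pos h]; ring

lemma fwd1 (u v : ℝ) (h : |v| < u) :
    Real.sqrt ((u^2 - v^2)/2) ^ 2 = (u^2 - v^2)/2 ∧
    Real.sqrt ((u*v)^2 + Real.sqrt ((u^2 - v^2)/2) ^ 4) = (u^2 + v^2)/2 := by
  have hv : v^2 < u^2 := by nlinarith [abs_nonneg v, sq_abs v]
  have h2 : (0:ℝ) ≤ (u^2 - v^2)/2 := by linarith
  have hsq : Real.sqrt ((u^2 - v^2)/2) ^ 2 = (u^2 - v^2)/2 := Real.sq_sqrt h2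
  refine ⟨hsq, ?_⟩
  have h4 : Real.sqrt ((u^2 - v^2)/2) ^ 4 = ((u^2 - v^2)/2)^2 := by
    have : Real.sqrt ((u^2 - v^2)/2) ^ 4 = (Real.sqrt ((u^2 - v^2)/2) ^ 2)^2 := by ring
    rw [this, hsq]
  rw [h4]
  have : (u*v)^2 + ((u^2 - v^2)/2)^2 = ((u^2 + v^2)/2)^2 := by ring
  rw [this, Real.sqrt_sq (by positivity)]

lemma fwd (u v : ℝ) (h : |v| < u) :
    Real.sqrt (Real.sqrt ((u^2 - v^2)/2) ^ 2 + Real.sqrt ((u*v)^2 + Real.sqrt ((u^2 - v^2)/2) ^ 4)) = u ∧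
    Real.sign (u*v) * Real.sqrt (-(Real.sqrt ((u^2 - v^2)/2) ^ 2) + Real.sqrt ((u*v)^2 + Real.sqrt ((u^2 - v^2)/2) ^ 4)) = v := by
  obtain ⟨h1, h2⟩ := fwd1 u v h
  have hu : 0 < u := lt_of_le_of_lt (abs_nonneg v) h
  rw [h1, h2]
  constructor
  · have : (u^2 - v^2)/2 + (u^2 + v^2)/2 = u^2 := by ring
    rw [this, Real.sqrt_sq hu.le]
  · have : -((u^2 - v^2)/2) + (u^2 + v^2)/2 = v^2 := by ring
    rw [this, Real.sqrt_sq_eq_abs]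
    have hs : Real.sign (u*v) = Real.sign v := by
      rcases lt_trichotomy v 0 with hv | hv | hv
      · rw [Real.sign_of_neg hv, Real.sign_of_neg (mul_neg_of_pos_of_neg hu hv)]
      · simp [hv]
      · rw [Real.sign_of_pos hv, Real.sign_of_pos (mul_pos hu hv)]
    rw [hs, sign_mul_abs']

lemma bwd (β α : ℝ) (hα : 0 < α) :
    let s := Real.sqrt (β^2 + α^4)
    let u := Real.sqrt (α^2 + s)
    let v := Real.sign β * Real.sqrt (-(α^2) + s)
    |v| < u ∧ u * v = β ∧ Real.sqrt ((u^2 - v^2)/2) = α := by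
  intro s u v
  have hs0 : (0:ℝ) ≤ β^2 + α^4 := by positivity
  have hs : s^2 = β^2 + α^4 := Real.sq_sqrt hs0
  have hsle : α^2 ≤ s := by
    have : Real.sqrt (α^4) ≤ s := Real.sqrt_le_sqrt (by nlinarith)
    rwa [show α^4 = (α^2)^2 by ring, Real.sqrt_sq (by positivity)] at this
  have hsnn : 0 ≤ s := Real.sqrt_nonneg _
  have hu2 : u^2 = α^2 + s := Real.sq_sqrt (by positivity)
  have hw2 : Real.sqrt (-(α^2) + s) ^ 2 = -(α^2) + s := Real.sq_sqrt (by linarith)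
  have hv2 : v^2 = s - α^2 := by
    rcases eq_or_ne β 0 with hb | hb
    · have hsa : s = α^2 := by
        simp only [s, hb]
        rw [show (0:ℝ)^2 + α^4 = (α^2)^2 by ring, Real.sqrt_sq (by positivity)]
      simp [v, hb, hsa]
    · have : Real.sign β ^ 2 = 1 := by
        rcases lt_trichotomy β 0 with h | h | h
        · rw [Real.sign_of_neg h]; ring
        · exact absurd h hb
        · rw [Real.sign_of_pos h]; ring
      show (Real.sign β * Real.sqrt (-(α^2) + s))^2 = _
      rw [mul_pow, this, hw2]; ring
  refine ⟨?_, ?_, ?_⟩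
  · have h1 : v^2 < u^2 := by rw [hv2, hu2]; nlinarith
    have hunn : 0 ≤ u := Real.sqrt_nonneg _
    nlinarith [abs_nonneg v, sq_abs v]
  · have : u * Real.sqrt (-(α^2) + s) = Real.sqrt ((α^2 + s) * (-(α^2) + s)) := by
      rw [← Real.sqrt_mul (by positivity)]
    show u * (Real.sign β * Real.sqrt (-(α^2) + s)) = β
    rw [show u * (Real.sign β * Real.sqrt (-(α^2) + s)) = Real.sign β * (u * Real.sqrt (-(α^2) + s)) by ring,
      this, show (α^2 + s) * (-(α^2) + s) = s^2 - α^4 by ring, hs,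
      show β^2 + α^4 - α^4 = β^2 by ring, Real.sqrt_sq_eq_abs, sign_mul_abs']
  · rw [hu2, hv2, show (α^2 + s - (s - α^2))/2 = α^2 by ring, Real.sqrt_sq hα.le]

theorem stmt2 {d : ℕ} :
    let D : Set ((Fin d → ℝ) × (Fin d → ℝ)) := {p | ∀ i, |p.2 i| < p.1 i}
    let C : Set ((Fin d → ℝ) × (Fin d → ℝ)) := {q | ∀ i, 0 < q.2 i}
    let g : ((Fin d → ℝ) × (Fin d → ℝ)) → ((Fin d → ℝ) × (Fin d → ℝ)) :=
      fun p => (fun i => p.1 i * p.2 i,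
                fun i => Real.sqrt ((p.1 i ^ 2 - p.2 i ^ 2) / 2))
    let ginv : ((Fin d → ℝ) × (Fin d → ℝ)) → ((Fin d → ℝ) × (Fin d → ℝ)) :=
      fun q => (fun i => Real.sqrt (q.2 i ^ 2 + Real.sqrt (q.1 i ^ 2 + q.2 i ^ 4)),
                fun i => Real.sign (q.1 i) *
                  Real.sqrt (-(q.2 i ^ 2) + Real.sqrt (q.1 i ^ 2 + q.2 i ^ 4)))
    Set.BijOn g D C ∧ (∀ p ∈ D, ginv (g p) = p) ∧ (∀ q ∈ C, g (ginv q) = q) := by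
  intro D C g ginv
  have h1 : ∀ p ∈ D, ginv (g p) = p := by
    intro p hp
    have := fun i => fwd (p.1 i) (p.2 i) (hp i)
    ext i
    · exact (this i).1
    · exact (this i).2
  have h2 : ∀ q ∈ C, g (ginv q) = q := by
    intro q hq
    have := fun i => bwd (q.1 i) (q.2 i) (hq i)
    ext i
    · exact (this i).2.1
    · exact (this i).2.2
  have hmg : Set.MapsTo g D C := by
    intro p hp i
    have hv : (p.2 i)^2 < (p.1 i)^2 := by nlinarith [abs_nonneg (p.2 i), sq_abs (p.2 i), hp i]
    show 0 < Real.sqrt ((p.1 i ^ 2 - p.2 i ^ 2) / 2)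
    exact Real.sqrt_pos.mpr (by linarith)
  have hmi : Set.MapsTo ginv C D := by
    intro q hq i
    exact (bwd (q.1 i) (q.2 i) (hq i)).1
  exact ⟨Set.InvOn.bijOn ⟨h1, h2⟩ hmg hmi, h1, h2⟩
end

section
/- Let (u_t, v_t) solve the gradient flow d/dt(u_t,v_t) = −∇F(u_t,v_t) with F(u,v) = L(u⊙v) for differentiable L, with initialization u_0 = √2·α·𝟏 and v_0 = 0 for some α > 0. Then for all t ≥ 0 and all coordinates i, u_t[i] > |v_t[i]| ≥ 0. In particular u_t[i] can be expressed as u_t[i] = √(α² + √(β_t[i]² + α⁴)) where β_t = u_t ⊙ v_t. -/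
/-!
Coordinatewise the flow reads `u' = -c v`, `v' = -c u` with `c = ∂ᵢL(u ⊙ v)`, so `u² - v²` is
conserved and equals `2α²`. Hence `u` never vanishes and, starting positive, stays positive by
the intermediate value theorem; then `u > |v|`. Finally `β² + α⁴ = u²v² + α⁴ = (u² - α²)²`,
which solves for `u`.
-/

theorem sq_sub_sq_eq_of_hasDerivAt {f g c : ℝ → ℝ}
    (hf : ∀ t, HasDerivAt f (-(c t * g t)) t) (hg : ∀ t, HasDerivAt g (-(c t * f t)) t)
    (s t : ℝ) : f s ^ 2 - g s ^ 2 = f t ^ 2 - g t ^ 2 := by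
  have hderiv : ∀ t, HasDerivAt (fun t => f t ^ 2 - g t ^ 2) 0 t := fun t =>
    (((hf t).pow 2).sub ((hg t).pow 2)).congr_deriv (by ring)
  exact is_const_of_deriv_eq_zero (fun t => (hderiv t).differentiableAt)
    (fun t => (hderiv t).deriv) s t

theorem lt_of_continuous_of_forall_ne {X α : Type*} [TopologicalSpace X] [PreconnectedSpace X]
    [LinearOrder α] [TopologicalSpace α] [OrderClosedTopology α] {f : X → α} {c : α}
    (hf : Continuous f) (hne : ∀ x, f x ≠ c) {a : X} (ha : c < f a) (x : X) : c < f x := by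
  by_contra! hx
  obtain ⟨y, hy⟩ := intermediate_value_univ x a hf ⟨hx, ha.le⟩
  exact hne y hy

theorem abs_lt_of_sq_sub_sq_eq {u v α : ℝ} (hu : 0 < u) (hα : α ≠ 0)
    (h : u ^ 2 - v ^ 2 = 2 * α ^ 2) : |v| < u := by
  refine abs_lt_of_sq_lt_sq ?_ hu.le
  nlinarith [pow_pos (sq_pos_of_ne_zero hα) 1]

theorem eq_sqrt_of_sq_sub_sq_eq {u v α : ℝ} (hu : 0 ≤ u) (h : u ^ 2 - v ^ 2 = 2 * α ^ 2) :
    u = Real.sqrt (α ^ 2 + Real.sqrt ((u * v) ^ 2 + α ^ 4)) := by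
  have hsq : (u * v) ^ 2 + α ^ 4 = (u ^ 2 - α ^ 2) ^ 2 := by
    rw [mul_pow, show v ^ 2 = u ^ 2 - 2 * α ^ 2 by linarith]
    ring
  rw [hsq, Real.sqrt_sq (by nlinarith [sq_nonneg v]), add_sub_cancel, Real.sqrt_sq hu]

theorem stmt4_general {d : ℕ} (gL : (Fin d → ℝ) → (Fin d → ℝ))
    (α : ℝ) (hα : 0 < α) (u v : ℝ → Fin d → ℝ)
    (hu0 : u 0 = fun _ => Real.sqrt 2 * α) (hv0 : v 0 = 0)
    (hu : ∀ t i, HasDerivAt (fun s => u s i)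
      (-(gL (fun j => u t j * v t j) i * v t i)) t)
    (hv : ∀ t i, HasDerivAt (fun s => v s i)
      (-(gL (fun j => u t j * v t j) i * u t i)) t) :
    ∀ t ≥ (0:ℝ), ∀ i, |v t i| < u t i ∧
      u t i = Real.sqrt (α ^ 2 + Real.sqrt ((u t i * v t i) ^ 2 + α ^ 4)) := by
  intro t _ i
  have hcons : ∀ s, u s i ^ 2 - v s i ^ 2 = 2 * α ^ 2 := fun s => by
    rw [sq_sub_sq_eq_of_hasDerivAt (hu · i) (hv · i) s 0, hu0, hv0, mul_pow,
      Real.sq_sqrt zero_le_two]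
    simp
  have hne : ∀ s, u s i ≠ 0 := fun s hs => by
    nlinarith [hcons s, sq_nonneg (v s i), pow_pos hα 2]
  have hpos : 0 < u t i :=
    lt_of_continuous_of_forall_ne (continuous_iff_continuousAt.2 fun s => (hu s i).continuousAt)
      hne (a := 0) (by simp [hu0, hα]) t
  exact ⟨abs_lt_of_sq_sub_sq_eq hpos hα.ne' (hcons t),
    eq_sqrt_of_sq_sub_sq_eq hpos.le (hcons t)⟩

theorem stmt4 {d : ℕ} (L : (Fin d → ℝ) → ℝ) (gL : (Fin d → ℝ) → (Fin d → ℝ))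
    (hdiff : Differentiable ℝ L)
    (hgrad : ∀ w v, (fderiv ℝ L w) v = ∑ i, gL w i * v i)
    (α : ℝ) (hα : 0 < α) (u v : ℝ → Fin d → ℝ)
    (hu0 : u 0 = fun _ => Real.sqrt 2 * α) (hv0 : v 0 = 0)
    (hu : ∀ t i, HasDerivAt (fun s => u s i)
      (-(gL (fun j => u t j * v t j) i * v t i)) t)
    (hv : ∀ t i, HasDerivAt (fun s => v s i)
      (-(gL (fun j => u t j * v t j) i * u t i)) t) :
    ∀ t ≥ (0:ℝ), ∀ i, |v t i| < u t i ∧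
      u t i = Real.sqrt (α ^ 2 + Real.sqrt ((u t i * v t i) ^ 2 + α ^ 4)) :=
  stmt4_general gL α hα u v hu0 hv0 hu hv
end

section
/- For any fixed β ∈ ℝ^d, the rescaled hyperbolic entropy φ̃_α(β) := φ_α(β) / ln(1/α) converges to the ℓ¹-norm ‖β‖₁ as α → 0⁺. -/
/-! Since `b ↦ b · arsinh (b / α²)` is even and `arsinh (c / α²) = log (c + √(c² + α⁴)) + 2 log (1/α)`,
each summand of `2 φ_α(β)` is `2 |βᵢ| log (1/α)` plus a remainder that is continuous at `α = 0`.
Dividing by `log (1/α) → ∞` leaves `2 |βᵢ|`. -/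

open Filter Real Set Topology

lemma tendsto_log_one_div_nhdsGT_zero : Tendsto (fun α : ℝ => log (1 / α)) (𝓝[>] 0) atTop := by
  simpa only [one_div, Function.comp_def] using tendsto_log_atTop.comp tendsto_inv_nhdsGT_zero

lemma mul_arsinh_div_eq_abs (b x : ℝ) : b * arsinh (b / x) = |b| * arsinh (|b| / x) := by
  rcases abs_cases b with ⟨hb, -⟩ | ⟨hb, -⟩
  · rw [hb]
  · rw [hb, neg_div, arsinh_neg, neg_mul_neg]

lemma arsinh_div_eq_log (c : ℝ) {x : ℝ} (hx : 0 < x) :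
    arsinh (c / x) = log (c + √(c ^ 2 + x ^ 2)) - log x := by
  have hsqrt : √(1 + (c / x) ^ 2) = √(c ^ 2 + x ^ 2) / x := by
    rw [show 1 + (c / x) ^ 2 = (c ^ 2 + x ^ 2) / x ^ 2 by field_simp; ring,
      sqrt_div' _ (sq_nonneg x), sqrt_sq hx.le]
  have hpos : 0 < c + √(c ^ 2 + x ^ 2) := by
    have : |c| < √(c ^ 2 + x ^ 2) := by
      rw [← sqrt_sq_eq_abs]
      exact sqrt_lt_sqrt (sq_nonneg c) (lt_add_of_pos_right _ (by positivity))
    linarith [neg_abs_le c]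
  rw [arsinh, hsqrt, ← add_div, log_div hpos.ne' hx.ne']

lemma mul_arsinh_sub_sqrt_eq (b : ℝ) {α : ℝ} (hα : 0 < α) :
    b * arsinh (b / α ^ 2) - √(b ^ 2 + α ^ 4) + α ^ 2 =
      2 * |b| * log (1 / α) + (|b| * log (|b| + √(b ^ 2 + α ^ 4)) - √(b ^ 2 + α ^ 4) + α ^ 2) := by
  rw [mul_arsinh_div_eq_abs, arsinh_div_eq_log _ (by positivity), sq_abs, ← pow_mul, log_pow,
    one_div, log_inv]
  ring

lemma continuousAt_abs_mul_log_add_sqrt (b : ℝ) :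
    ContinuousAt (fun α : ℝ => |b| * log (|b| + √(b ^ 2 + α ^ 4)) - √(b ^ 2 + α ^ 4) + α ^ 2) 0 := by
  rcases eq_or_ne b 0 with rfl | hb
  · simp only [abs_zero, zero_mul, zero_sub]
    fun_prop
  · fun_prop (disch := positivity)

lemma tendsto_mul_arsinh_sub_sqrt_div_log (b : ℝ) :
    Tendsto (fun α : ℝ => (b * arsinh (b / α ^ 2) - √(b ^ 2 + α ^ 4) + α ^ 2) / log (1 / α))
      (𝓝[>] 0) (𝓝 (2 * |b|)) := by
  have hrem := ((continuousAt_abs_mul_log_add_sqrt b).tendsto.mono_left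
    nhdsWithin_le_nhds).div_atTop tendsto_log_one_div_nhdsGT_zero
  rw [← add_zero (2 * |b|)]
  refine (tendsto_const_nhds.add hrem).congr' ?_
  filter_upwards [self_mem_nhdsWithin, tendsto_log_one_div_nhdsGT_zero.eventually_gt_atTop 0]
    with α (hα : 0 < α) hlog
  rw [mul_arsinh_sub_sqrt_eq b hα]
  field_simp

theorem stmt6 {d : ℕ} (β : Fin d → ℝ)
    (φ : ℝ → (Fin d → ℝ) → ℝ)
    (hφ : ∀ α γ, φ α γ = (1/2) * ∑ i,
      (γ i * Real.arsinh (γ i / α ^ 2) - Real.sqrt (γ i ^ 2 + α ^ 4) + α ^ 2)) :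
    Filter.Tendsto (fun α => φ α β / Real.log (1/α))
      (nhdsWithin 0 (Set.Ioi 0)) (nhds (∑ i, |β i|)) := by
  have hsum := (tendsto_finsetSum Finset.univ fun i _ =>
    tendsto_mul_arsinh_sub_sqrt_div_log (β i)).const_mul (1 / 2)
  simp only [← Finset.mul_sum, ← Finset.sum_div, ← mul_div_assoc, ← hφ] at hsum
  convert hsum using 2
  ring
end

section
/- For every β ∈ ℝ^d, d ≥ 1, and every 0 < α < min{1, √(‖β‖₁), (2‖β‖₁)^{-1}}, the rescaled hyperbolic entropy satisfies φ̃_α(β) ≤ (3/2)‖β‖₁; moreover for every 0 < α < exp(−d/2) it satisfies φ̃_α(β) ≥ ‖β‖₁ − d/ln(1/α²). -/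
open scoped BigOperators

open Real

lemma my_arsinh_le_self {z : ℝ} (hz : 0 ≤ z) : Real.arsinh z ≤ z := by
  rw [← Real.sinh_le_sinh, Real.sinh_arsinh]
  exact Real.self_le_sinh_iff.2 hz

lemma my_arsinh_le_log {z : ℝ} (hz : 0 < z) :
    Real.arsinh z ≤ Real.log (2 * z + 1 / (2 * z)) := by
  rw [Real.arsinh]
  apply Real.log_le_log (by positivity)
  have h1 : z * (1 / (2 * z)) = 1 / 2 := by field_simp
  have h2 : Real.sqrt (1 + z ^ 2) ≤ z + 1 / (2 * z) := by
    rw [Real.sqrt_le_left (by positivity)]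
    nlinarith [sq_nonneg (1 / (2 * z))]
  linarith

lemma my_log_le_arsinh {z : ℝ} (hz : 0 < z) :
    Real.log (2 * z) ≤ Real.arsinh z := by
  rw [Real.arsinh]
  apply Real.log_le_log (by positivity)
  have : z ≤ Real.sqrt (1 + z ^ 2) := Real.le_sqrt_of_sq_le (by nlinarith)
  linarith

lemma my_self_le_sqrt {b c : ℝ} (hb : 0 ≤ b) : b ≤ Real.sqrt (b ^ 2 + c ^ 2) :=
  Real.le_sqrt_of_sq_le (by nlinarith [sq_nonneg c])

lemma my_sqrt_le_add {b c : ℝ} (hb : 0 ≤ b) (hc : 0 ≤ c) :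
    Real.sqrt (b ^ 2 + c ^ 2) ≤ b + c := by
  rw [Real.sqrt_le_left (by positivity)]
  nlinarith [mul_nonneg hb hc]

lemma my_sqrt_lb_A {b c : ℝ} (hb : 0 ≤ b) (hc : 0 < c) (hbc : b ≤ c) :
    c + b ^ 2 / (2 * c) - b ^ 4 / (8 * c ^ 3) ≤ Real.sqrt (b ^ 2 + c ^ 2) := by
  have he : c + b ^ 2 / (2 * c) - b ^ 4 / (8 * c ^ 3)
      = (8 * c ^ 4 + 4 * b ^ 2 * c ^ 2 - b ^ 4) / (8 * c ^ 3) := by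
    field_simp; ring
  rw [he]
  apply Real.le_sqrt_of_sq_le
  rw [div_pow, div_le_iff₀ (by positivity)]
  nlinarith [pow_le_pow_left₀ hb hbc 2, pow_le_pow_left₀ hb hbc 4,
    mul_le_mul_of_nonneg_left (pow_le_pow_left₀ hb hbc 2) (sq_nonneg (b^3)),
    sq_nonneg b, sq_nonneg c, pow_pos hc 6, mul_pos (pow_pos hc 6) (mul_pos hc hc)]

lemma my_sqrt_lb_B {b c : ℝ} (hc : 0 < c) (h1 : c ≤ b) (h2 : 4 * b ≤ 5 * c) :
    b ^ 2 / c - b + (5 / 4) * c ≤ Real.sqrt (b ^ 2 + c ^ 2) := by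
  have he : b ^ 2 / c - b + (5 / 4) * c = (b ^ 2 - b * c + (5 / 4) * c ^ 2) / c := by
    field_simp
  rw [he]
  apply Real.le_sqrt_of_sq_le
  rw [div_pow, div_le_iff₀ (by positivity)]
  nlinarith [mul_nonneg (sub_nonneg.2 h1) (sub_nonneg.2 h2), sq_nonneg (b - c),
    sq_nonneg (5 * c - 4 * b), mul_pos hc hc, sq_nonneg c, sq_nonneg b,
    mul_nonneg (mul_nonneg (sub_nonneg.2 h1) (sub_nonneg.2 h2)) (sq_nonneg c)]


lemma core_upper {b c L S : ℝ} (hc : 0 < c) (hb0 : 0 ≤ b) (hbS : b ≤ S)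
    (hlog2 : Real.log 2 ≤ 3 * L) (hlogc : Real.log c = -2 * L)
    (hlog2S : 0 < b → Real.log (2 * b) ≤ L) :
    b * Real.arsinh (b / c) - Real.sqrt (b ^ 2 + c ^ 2) + c ≤ 3 * L * b := by
  rcases le_or_gt b c with hA | hA
  · -- Case A : b ≤ c
    have h1 : Real.arsinh (b / c) ≤ b / c := my_arsinh_le_self (div_nonneg hb0 hc.le)
    have h2 := my_sqrt_lb_A hb0 hc hA
    have e1 : b * Real.arsinh (b / c) ≤ b ^ 2 / c := by
      have := mul_le_mul_of_nonneg_left h1 hb0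
      calc b * Real.arsinh (b / c) ≤ b * (b / c) := this
        _ = b ^ 2 / c := by ring
    have e3 : b ^ 2 / (2 * c) ≤ b / 2 := by
      rw [div_le_div_iff₀ (by linarith) (by norm_num)]
      nlinarith
    have e4 : b ^ 4 / (8 * c ^ 3) ≤ b / 8 := by
      have hc3 : 0 < c ^ 3 := pow_pos hc 3
      rw [div_le_div_iff₀ (by linarith) (by norm_num)]
      nlinarith [pow_le_pow_left₀ hb0 hA 3]
    have e5 : b ^ 2 / c = b ^ 2 / (2 * c) + b ^ 2 / (2 * c) := by ring
    have hfin : (5 : ℝ) / 8 * b ≤ 3 * L * b := by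
      apply mul_le_mul_of_nonneg_right _ hb0
      nlinarith [Real.log_two_gt_d9]
    linarith
  · rcases le_or_gt (4 * b) (5 * c) with hB | hB
    · -- Case B : c < b ≤ 5c/4
      have hbpos : 0 < b := hc.trans hA
      have hz : 0 < b / c := div_pos hbpos hc
      have e1 := my_arsinh_le_log hz
      have hrw : 2 * (b / c) + 1 / (2 * (b / c)) = 2 * ((b / c) + 1 / (4 * (b / c))) := by
        field_simp; ring
      have hzpos : 0 < b / c + 1 / (4 * (b / c)) := by positivity
      have e2 : Real.log (2 * (b / c) + 1 / (2 * (b / c)))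
          = Real.log 2 + Real.log (b / c + 1 / (4 * (b / c))) := by
        rw [hrw, Real.log_mul (by norm_num) (ne_of_gt hzpos)]
      have e3 : Real.log (b / c + 1 / (4 * (b / c))) ≤ b / c + 1 / (4 * (b / c)) - 1 :=
        Real.log_le_sub_one_of_pos hzpos
      have e4 : b * (b / c + 1 / (4 * (b / c)) - 1) = b ^ 2 / c + c / 4 - b := by
        field_simp
      have e5 : b * Real.arsinh (b / c) ≤ b * Real.log 2 + (b ^ 2 / c + c / 4 - b) := by
        have h6 : Real.arsinh (b / c) ≤ Real.log 2 + (b / c + 1 / (4 * (b / c)) - 1) := by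
          rw [e2] at e1; linarith
        have h7 := mul_le_mul_of_nonneg_left h6 hb0
        have h8 : b * (Real.log 2 + (b / c + 1 / (4 * (b / c)) - 1))
            = b * Real.log 2 + b * (b / c + 1 / (4 * (b / c)) - 1) := by ring
        rw [h8, e4] at h7
        exact h7
      have e6 := my_sqrt_lb_B hc hA.le hB
      have e7 : b * Real.log 2 ≤ 3 * L * b := by
        have := mul_le_mul_of_nonneg_left hlog2 hb0
        linarith [this]
      linarith
    · -- Case C : b > 5c/4
      have hbpos : 0 < b := by nlinarith
      have hz : 0 < b / c := div_pos hbpos hc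
      have e1 := my_arsinh_le_log hz
      have hrw : 2 * (b / c) + 1 / (2 * (b / c)) = (2 * b) * (1 + c ^ 2 / (4 * b ^ 2)) / c := by
        field_simp; ring
      have hzpos : (0:ℝ) < 1 + c ^ 2 / (4 * b ^ 2) := by positivity
      have e2 : Real.log ((2 * b) * (1 + c ^ 2 / (4 * b ^ 2)) / c)
          = Real.log (2 * b) + Real.log (1 + c ^ 2 / (4 * b ^ 2)) - Real.log c := by
        rw [Real.log_div (by positivity) (ne_of_gt hc), Real.log_mul (by positivity) (ne_of_gt hzpos)]
      have e3 : Real.log (1 + c ^ 2 / (4 * b ^ 2)) ≤ c ^ 2 / (4 * b ^ 2) :=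
        (Real.log_le_sub_one_of_pos hzpos).trans_eq (by ring)
      have e5 : Real.log (2 * b) ≤ L := hlog2S hbpos
      have e6 : Real.arsinh (b / c) ≤ 3 * L + c ^ 2 / (4 * b ^ 2) := by
        rw [hrw, e2, hlogc] at e1; linarith
      have e7 : b * Real.arsinh (b / c) ≤ 3 * L * b + c ^ 2 / (4 * b) := by
        have h0 := mul_le_mul_of_nonneg_left e6 hb0
        have h8 : b * (3 * L + c ^ 2 / (4 * b ^ 2)) = 3 * L * b + c ^ 2 / (4 * b) := by
          field_simp
        rw [h8] at h0
        exact h0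
      have e8 : b ≤ Real.sqrt (b ^ 2 + c ^ 2) := my_self_le_sqrt hb0
      have e9 : c ^ 2 / (4 * b) + c - b ≤ 0 := by
        have h10 : c ^ 2 / (4 * b) ≤ c / 5 := by
          rw [div_le_div_iff₀ (by linarith) (by norm_num)]
          nlinarith
        nlinarith
      linarith

lemma core_lower {b c L : ℝ} (hc : 0 < c) (hb0 : 0 ≤ b) (hlogc : Real.log c = -2 * L) :
    2 * L * b - 1 ≤ b * Real.arsinh (b / c) - Real.sqrt (b ^ 2 + c ^ 2) + c := by
  rcases eq_or_lt_of_le hb0 with hb | hb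
  · rw [← hb]
    simp [Real.sqrt_sq hc.le]
  · have e1 : Real.log (2 * (b / c)) ≤ Real.arsinh (b / c) :=
      my_log_le_arsinh (div_pos hb hc)
    have e2 : Real.log (2 * (b / c)) = Real.log (2 * b) - Real.log c := by
      rw [← mul_div_assoc, Real.log_div (by positivity) (ne_of_gt hc)]
    have e5 : Real.sqrt (b ^ 2 + c ^ 2) ≤ b + c := my_sqrt_le_add hb0 hc.le
    have e6 : b - 1 / 2 ≤ b * Real.log (2 * b) := by
      have h7 : Real.log (1 / (2 * b)) ≤ 1 / (2 * b) - 1 :=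
        Real.log_le_sub_one_of_pos (by positivity)
      rw [one_div, Real.log_inv, inv_eq_one_div] at h7
      have h8 : 1 - 1 / (2 * b) ≤ Real.log (2 * b) := by linarith
      have h9 := mul_le_mul_of_nonneg_left h8 hb0
      have h10 : b * (1 - 1 / (2 * b)) = b - 1 / 2 := by field_simp
      rw [h10] at h9
      linarith
    have e7 : b * Real.log (2 * b) + 2 * L * b ≤ b * Real.arsinh (b / c) := by
      have h0 := mul_le_mul_of_nonneg_left e1 hb0
      rw [e2, hlogc] at h0
      have h11 : b * (Real.log (2 * b) - -2 * L) = b * Real.log (2 * b) + 2 * L * b := by ring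
      rw [h11] at h0
      exact h0
    linarith

lemma my_term_upper {α S b : ℝ} (hα0 : 0 < α) (hα1 : α < 1) (hS : α ^ 2 < S)
    (h2S : 2 * S * α < 1) (hb0 : 0 ≤ b) (hbS : b ≤ S) :
    b * Real.arsinh (b / α ^ 2) - Real.sqrt (b ^ 2 + α ^ 4) + α ^ 2
      ≤ 3 * Real.log (1 / α) * b := by
  have hα4 : α ^ 4 = (α ^ 2) ^ 2 := by ring
  have hL : Real.log (1 / α) = -Real.log α := by rw [one_div, Real.log_inv]
  rw [hα4]
  apply core_upper (by positivity) hb0 hbS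
  · have h3 : α ^ 3 < 1 / 2 := by nlinarith
    have h := Real.log_lt_log (by positivity) h3
    rw [Real.log_pow, one_div, Real.log_inv] at h
    push_cast at h
    rw [hL]; linarith
  · rw [Real.log_pow, hL]; push_cast; ring
  · intro hbpos
    have h2b : 2 * b ≤ 1 / α := by rw [le_div_iff₀ hα0]; nlinarith
    exact Real.log_le_log (by positivity) h2b

lemma my_term_lower {α b : ℝ} (hα0 : 0 < α) (hb0 : 0 ≤ b) :
    2 * Real.log (1 / α) * b - 1
      ≤ b * Real.arsinh (b / α ^ 2) - Real.sqrt (b ^ 2 + α ^ 4) + α ^ 2 := by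
  have hα4 : α ^ 4 = (α ^ 2) ^ 2 := by ring
  rw [hα4]
  apply core_lower (by positivity) hb0
  rw [Real.log_pow, one_div, Real.log_inv]
  push_cast; ring

lemma my_even_term (c x : ℝ) : x * Real.arsinh (x / c) = |x| * Real.arsinh (|x| / c) := by
  rcases abs_cases x with ⟨h, _⟩ | ⟨h, _⟩
  · rw [h]
  · rw [h, neg_div, Real.arsinh_neg]; ring

theorem stmt7 {d : ℕ} (hd : 1 ≤ d) (β : Fin d → ℝ)
    (φ : ℝ → (Fin d → ℝ) → ℝ)
    (hφ : ∀ α γ, φ α γ = (1/2) * ∑ i,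
      (γ i * Real.arsinh (γ i / α ^ 2) - Real.sqrt (γ i ^ 2 + α ^ 4) + α ^ 2)) :
    (∀ α : ℝ, 0 < α →
      α < min 1 (min (Real.sqrt (∑ i, |β i|)) (2 * ∑ i, |β i|)⁻¹) →
      φ α β / Real.log (1/α) ≤ (3/2) * ∑ i, |β i|) ∧
    (∀ α : ℝ, 0 < α → α < Real.exp (-(d:ℝ)/2) →
      (∑ i, |β i|) - d / Real.log (1/α^2) ≤ φ α β / Real.log (1/α)) := by
  constructor
  · intro α hα0 hlt
    have hα1 : α < 1 := lt_of_lt_of_le hlt (min_le_left _ _)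
    have hαs : α < Real.sqrt (∑ i, |β i|) :=
      lt_of_lt_of_le hlt ((min_le_right _ _).trans (min_le_left _ _))
    have hαi : α < (2 * ∑ i, |β i|)⁻¹ :=
      lt_of_lt_of_le hlt ((min_le_right _ _).trans (min_le_right _ _))
    have hS : α ^ 2 < ∑ i, |β i| := (Real.lt_sqrt hα0.le).1 hαs
    have hS0 : 0 < ∑ i, |β i| := lt_trans (by positivity) hS
    have h2S : 2 * (∑ i, |β i|) * α < 1 := by
      have h2Sp : 0 < 2 * ∑ i, |β i| := by linarith
      calc 2 * (∑ i, |β i|) * α < 2 * (∑ i, |β i|) * (2 * ∑ i, |β i|)⁻¹ :=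
            mul_lt_mul_of_pos_left hαi h2Sp
        _ = 1 := mul_inv_cancel₀ (ne_of_gt h2Sp)
    have hL0 : 0 < Real.log (1 / α) := Real.log_pos (by rw [lt_div_iff₀ hα0]; linarith)
    rw [hφ, div_le_iff₀ hL0]
    have key : ∀ i ∈ Finset.univ,
        β i * Real.arsinh (β i / α ^ 2) - Real.sqrt (β i ^ 2 + α ^ 4) + α ^ 2
          ≤ 3 * Real.log (1 / α) * |β i| := by
      intro i _
      rw [my_even_term, ← sq_abs (β i)]
      exact my_term_upper hα0 hα1 hS h2S (abs_nonneg _)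
        (Finset.single_le_sum (fun j _ => abs_nonneg (β j)) (Finset.mem_univ i))
    have hsum := Finset.sum_le_sum key
    rw [← Finset.mul_sum] at hsum
    linarith
  · intro α hα0 hlt
    have hα1 : α < 1 := by
      have h1 : Real.exp (-(d : ℝ) / 2) ≤ 1 := by
        rw [Real.exp_le_one_iff]
        have : (1 : ℝ) ≤ d := by exact_mod_cast hd
        linarith
      linarith
    have hL0 : 0 < Real.log (1 / α) := Real.log_pos (by rw [lt_div_iff₀ hα0]; linarith)
    have hlog2L : Real.log (1 / α ^ 2) = 2 * Real.log (1 / α) := by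
      rw [one_div, one_div, Real.log_inv, Real.log_inv, Real.log_pow]
      push_cast; ring
    rw [hφ, hlog2L, le_div_iff₀ hL0]
    have key : ∀ i ∈ Finset.univ,
        2 * Real.log (1 / α) * |β i| - 1
          ≤ β i * Real.arsinh (β i / α ^ 2) - Real.sqrt (β i ^ 2 + α ^ 4) + α ^ 2 := by
      intro i _
      rw [my_even_term, ← sq_abs (β i)]
      exact my_term_lower hα0 (abs_nonneg _)
    have hsum := Finset.sum_le_sum key
    rw [Finset.sum_sub_distrib, ← Finset.mul_sum, Finset.sum_const, Finset.card_univ,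
      Fintype.card_fin, nsmul_eq_mul, mul_one] at hsum
    have hL : Real.log (1 / α) ≠ 0 := ne_of_gt hL0
    have heq : ((∑ i, |β i|) - (d : ℝ) / (2 * Real.log (1 / α))) * Real.log (1 / α)
        = (∑ i, |β i|) * Real.log (1 / α) - (d : ℝ) / 2 := by
      field_simp
    rw [heq]
    linarith
end

section
/- Let (β_s)_{s ∈ [0,∞)} ⊂ ℝ^d be a family indexed by α with β^α_s → β ∈ ℝ^d as α → 0. If β_i > 0 then (∇φ̃_α(β^α))_i = arcsinh(β^α_i/α²)/(2 ln(1/α)) converges to 1 as α → 0; if β_i < 0 it converges to −1; and if the full vector ∇φ̃_α(β^α) converges to some η ∈ ℝ^d, then η ∈ ∂‖β‖₁, i.e. η_i = sign(β_i) whenever β_i ≠ 0 and η_i ∈ [−1,1] whenever β_i = 0. -/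
/-!
The `i`-th coordinate of `∇φ̃_α(β^α)` is `arsinh t / (2 ln(1/α))` with `t = β^α_i / α²`.
Since `arsinh t = ln(2t) + o(1)` as `t → ∞`, for `β_i > 0` the numerator is
`ln(2 β^α_i) + 2 ln(1/α) + o(1)`, so the quotient tends to `1`; the case `β_i < 0` follows because
`arsinh` is odd. When `β_i = 0`, monotonicity of `arsinh` bounds the coordinate in absolute value
by the same expression with `β^α_i` replaced by the constant `1`, whose limit is `1`.
-/

open Filter Real Topology

lemma Filter.Tendsto.div_tendsto_one_of_sub {ι : Type*} {l : Filter ι} {a b : ι → ℝ} {c : ℝ}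
    (hb : Tendsto b l atTop) (hab : Tendsto (fun x => a x - b x) l (𝓝 c)) :
    Tendsto (fun x => a x / b x) l (𝓝 1) := by
  have h : Tendsto (fun x => (a x - b x) / b x + 1) l (𝓝 (0 + 1)) :=
    (hab.div_atTop hb).add tendsto_const_nhds
  rw [zero_add] at h
  refine h.congr' ?_
  filter_upwards [hb.eventually_gt_atTop 0] with x hx
  field_simp
  ring

lemma tendsto_arsinh_sub_log_atTop :
    Tendsto (fun t => arsinh t - log t) atTop (𝓝 (log 2)) := by
  have hsqrt : Tendsto (fun t : ℝ => √((t ^ 2)⁻¹ + 1)) atTop (𝓝 1) := by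
    simpa using ((tendsto_pow_atTop two_ne_zero).inv_tendsto_atTop.add_const 1).sqrt
  have hlog : Tendsto (fun t : ℝ => log (1 + √((t ^ 2)⁻¹ + 1))) atTop (𝓝 (log 2)) := by
    have := (hsqrt.const_add 1).log (by norm_num)
    norm_num at this
    exact this
  refine hlog.congr' ?_
  filter_upwards [eventually_gt_atTop 0] with t ht
  have hroot : √((t ^ 2)⁻¹ + 1) = √(1 + t ^ 2) / t := by
    rw [show (t ^ 2)⁻¹ + 1 = (1 + t ^ 2) / t ^ 2 by field_simp, sqrt_div (by positivity),
      sqrt_sq ht.le]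
  rw [hroot, arsinh, ← log_div (by positivity) ht.ne']
  congr 1
  field_simp

lemma tendsto_two_mul_log_one_div_nhdsGT_zero :
    Tendsto (fun α : ℝ => 2 * log (1 / α)) (𝓝[>] 0) atTop :=
  ((tendsto_neg_atBot_atTop.comp tendsto_log_nhdsGT_zero).const_mul_atTop two_pos).congr
    fun α => by rw [one_div, log_inv, Function.comp_apply]

/-- The `i`-th coordinate of `∇φ̃_α(β)` when `β_i = y`. -/
noncomputable def rescaledHypentropyGrad (y α : ℝ) : ℝ :=
  arsinh (y / α ^ 2) / (2 * log (1 / α))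

lemma tendsto_rescaledHypentropyGrad_of_pos {y : ℝ → ℝ} {L : ℝ} (hL : 0 < L)
    (hy : Tendsto y (𝓝[>] 0) (𝓝 L)) :
    Tendsto (fun α => rescaledHypentropyGrad (y α) α) (𝓝[>] 0) (𝓝 1) := by
  have ht : Tendsto (fun α => y α / α ^ 2) (𝓝[>] 0) atTop := by
    have hsq : Tendsto (fun α : ℝ => (α ^ 2)⁻¹) (𝓝[>] 0) atTop :=
      tendsto_inv_nhdsGT_zero.comp
        (tendsto_nhdsWithin_of_tendsto_nhds_of_eventually_within _
          (((continuous_pow 2).tendsto' (0 : ℝ) 0 (by norm_num)).mono_left nhdsWithin_le_nhds)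
          (eventually_mem_nhdsWithin.mono fun α (hα : 0 < α) => pow_pos hα 2))
    simpa only [div_eq_mul_inv] using hy.pos_mul_atTop hL hsq
  refine tendsto_two_mul_log_one_div_nhdsGT_zero.div_tendsto_one_of_sub
    (c := log 2 + log L) ?_
  refine ((tendsto_arsinh_sub_log_atTop.comp ht).add (hy.log hL.ne')).congr' ?_
  filter_upwards [self_mem_nhdsWithin, hy.eventually (eventually_gt_nhds hL)]
    with α (hα : 0 < α) hyα
  simp only [Function.comp_apply]
  rw [log_div hyα.ne' (by positivity), one_div, log_inv, log_pow]
  push_cast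
  ring

lemma tendsto_rescaledHypentropyGrad_of_neg {y : ℝ → ℝ} {L : ℝ} (hL : L < 0)
    (hy : Tendsto y (𝓝[>] 0) (𝓝 L)) :
    Tendsto (fun α => rescaledHypentropyGrad (y α) α) (𝓝[>] 0) (𝓝 (-1)) := by
  refine (tendsto_rescaledHypentropyGrad_of_pos (neg_pos.2 hL) hy.neg).neg.congr fun α => ?_
  simp only [rescaledHypentropyGrad, neg_div, arsinh_neg, neg_neg]

lemma abs_rescaledHypentropyGrad_le {y C α : ℝ} (hy : |y| ≤ C) (hα : 0 < log (1 / α)) :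
    |rescaledHypentropyGrad y α| ≤ rescaledHypentropyGrad C α := by
  have hbound : |arsinh (y / α ^ 2)| ≤ arsinh (C / α ^ 2) := by
    rw [abs_le, ← arsinh_neg, ← neg_div, arsinh_le_arsinh, arsinh_le_arsinh]
    obtain ⟨hlo, hhi⟩ := abs_le.1 hy
    constructor <;> gcongr
  rw [rescaledHypentropyGrad, rescaledHypentropyGrad, abs_div, abs_of_pos (show 0 < 2 * log (1 / α) by linarith)]
  exact div_le_div_of_nonneg_right hbound (by linarith)

lemma abs_le_one_of_tendsto_rescaledHypentropyGrad {y : ℝ → ℝ} {C η : ℝ} (hC : 0 < C)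
    (hy : ∀ᶠ α in 𝓝[>] 0, |y α| ≤ C)
    (hη : Tendsto (fun α => rescaledHypentropyGrad (y α) α) (𝓝[>] 0) (𝓝 η)) :
    |η| ≤ 1 := by
  refine le_of_tendsto_of_tendsto hη.abs
    (tendsto_rescaledHypentropyGrad_of_pos hC tendsto_const_nhds) ?_
  filter_upwards [hy, tendsto_two_mul_log_one_div_nhdsGT_zero.eventually_gt_atTop 0]
    with α hyα hα
  exact abs_rescaledHypentropyGrad_le hyα (by linarith)


theorem stmt8 {d : ℕ} (B : ℝ → (Fin d → ℝ)) (β : Fin d → ℝ)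
    (hconv : Filter.Tendsto B (nhdsWithin 0 (Set.Ioi 0)) (nhds β)) :
    (∀ i, 0 < β i → Filter.Tendsto
      (fun α => Real.arsinh (B α i / α ^ 2) / (2 * Real.log (1/α)))
      (nhdsWithin 0 (Set.Ioi 0)) (nhds 1)) ∧
    (∀ i, β i < 0 → Filter.Tendsto
      (fun α => Real.arsinh (B α i / α ^ 2) / (2 * Real.log (1/α)))
      (nhdsWithin 0 (Set.Ioi 0)) (nhds (-1))) ∧
    (∀ η : Fin d → ℝ, Filter.Tendsto
      (fun α => fun i => Real.arsinh (B α i / α ^ 2) / (2 * Real.log (1/α)))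
      (nhdsWithin 0 (Set.Ioi 0)) (nhds η) →
      (∀ i, β i ≠ 0 → η i = Real.sign (β i)) ∧ (∀ i, β i = 0 → |η i| ≤ 1)) := by
  have hB : ∀ i, Tendsto (fun α => B α i) (𝓝[>] 0) (𝓝 (β i)) := tendsto_pi_nhds.mp hconv
  have hpos i (hi : 0 < β i) := tendsto_rescaledHypentropyGrad_of_pos hi (hB i)
  have hneg i (hi : β i < 0) := tendsto_rescaledHypentropyGrad_of_neg hi (hB i)
  refine ⟨hpos, hneg, fun η hη => ⟨fun i hi => ?_, fun i hi => ?_⟩⟩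
  · have hηi := tendsto_pi_nhds.mp hη i
    rcases hi.lt_or_gt with h | h
    · rw [sign_of_neg h]
      exact tendsto_nhds_unique hηi (hneg i h)
    · rw [sign_of_pos h]
      exact tendsto_nhds_unique hηi (hpos i h)
  · have hsmall : ∀ᶠ α in 𝓝[>] 0, |B α i| ≤ 1 := by
      have h0 := (hB i).abs
      rw [hi, abs_zero] at h0
      exact h0.eventually_le_const one_pos
    exact abs_le_one_of_tendsto_rescaledHypentropyGrad one_pos hsmall (tendsto_pi_nhds.mp hη i)
end

section
/- Let X ∈ ℝ^{n×d} have columns x̃_1,…,x̃_d in general position: for any k ≤ min(n,d), indices j_1 < ⋯ < j_k, and signs σ_1,…,σ_k ∈ {−1,1}, the affine span of σ_1 x̃_{j_1},…,σ_k x̃_{j_k} contains no element of {± x̃_j : j ∉ {j_1,…,j_k}}. Let s = X^⊤ r for some r ∈ ℝ^n with |s_i| ≤ 1 for all i, and let I = {i : |s_i| = 1}. Then the submatrix X_I (columns of X indexed by I) has trivial kernel (is injective as a linear map), and in particular card(I) ≤ n. -/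
open scoped BigOperators

theorem stmt12 {n d : ℕ} (X : Fin n → Fin d → ℝ)
    (hGP : ∀ (k : ℕ), k ≤ min n d → ∀ (J : Fin k → Fin d), Function.Injective J →
      ∀ (σ : Fin k → ℝ), (∀ l, σ l = 1 ∨ σ l = -1) →
      ∀ j : Fin d, (∀ l, J l ≠ j) → ∀ ε : ℝ, ε = 1 ∨ ε = -1 →
        ε • (fun m => X m j) ∉
          affineSpan ℝ (Set.range (fun l => σ l • (fun m => X m (J l)) : Fin k → Fin n → ℝ)))
    (r : Fin n → ℝ) (s : Fin d → ℝ)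
    (hs : ∀ i, s i = ∑ k, X k i * r k) (hb : ∀ i, |s i| ≤ 1)
    (I : Finset (Fin d)) (hI : ∀ i, i ∈ I ↔ |s i| = 1) :
    LinearIndependent ℝ (fun i : {i // i ∈ I} => (fun k => X k i.1 : Fin n → ℝ)) ∧
      I.card ≤ n := by
  classical
  set w : {i // i ∈ I} → (Fin n → ℝ) := fun i => (fun k => X k i.1) with hw
  -- signs on I
  have hsI : ∀ i : {i // i ∈ I}, s i.1 = 1 ∨ s i.1 = -1 := by
    intro i
    have h1 : |s i.1| = 1 := (hI i.1).mp i.2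
    rcases (abs_eq (by norm_num : (0:ℝ) ≤ 1)).mp h1 with h | h
    · exact Or.inl h
    · exact Or.inr h
  have hsne : ∀ i : {i // i ∈ I}, s i.1 ≠ 0 := by
    intro i; rcases hsI i with h | h <;> rw [h] <;> norm_num
  have hssq : ∀ i : {i // i ∈ I}, s i.1 * s i.1 = 1 := by
    intro i; rcases hsI i with h | h <;> rw [h] <;> norm_num
  -- inner product identity: any linear relation gives ∑ g i * s i = 0
  have key : ∀ g : {i // i ∈ I} → ℝ, (∑ i, g i • w i) = 0 →
      ∑ i, g i * s i.1 = 0 := by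
    intro g hg
    have h0 : ∑ k, (∑ i, g i • w i) k * r k = 0 := by
      rw [hg]; simp
    rw [← h0]
    simp only [Finset.sum_apply, Pi.smul_apply, smul_eq_mul, Finset.sum_mul]
    rw [Finset.sum_comm]
    refine Finset.sum_congr rfl ?_
    intro i _
    rw [hs i.1, Finset.mul_sum]
    refine Finset.sum_congr rfl ?_
    intro k _
    simp only [hw]; ring
  have hli : LinearIndependent ℝ (fun i : {i // i ∈ I} => (fun k => X k i.1 : Fin n → ℝ)) := by
    by_contra hnli
    rw [Fintype.not_linearIndependent_iff] at hnli
    have hex : ∃ m, ∃ g : {i // i ∈ I} → ℝ, (∑ i, g i • w i) = 0 ∧ (∃ i, g i ≠ 0) ∧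
        (Finset.univ.filter (fun i => g i ≠ 0)).card = m := by
      obtain ⟨g, hg, i, hi⟩ := hnli
      exact ⟨_, g, hg, ⟨i, hi⟩, rfl⟩
    obtain ⟨g, hg0, ⟨j, hj⟩, hcard⟩ := Nat.find_spec hex
    set m₀ := Nat.find hex with hm₀
    set T : Finset {i // i ∈ I} := Finset.univ.filter (fun i => g i ≠ 0) with hT
    have hjT : j ∈ T := by simp [hT, hj]
    set T' : Finset {i // i ∈ I} := T.erase j with hT'
    have hcardT : T.card = m₀ := hcard
    have hcardT' : T'.card = m₀ - 1 := by rw [hT', Finset.card_erase_of_mem hjT, hcardT]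
    have hcardT'lt : T'.card < m₀ := by
      have : 0 < m₀ := by
        rw [← hcardT]; exact Finset.card_pos.mpr ⟨j, hjT⟩
      omega
    -- T' columns are linearly independent by minimality of support
    have hindep : LinearIndependent ℝ (fun x : {x // x ∈ T'} => w x.1) := by
      by_contra hdep
      rw [Fintype.not_linearIndependent_iff] at hdep
      obtain ⟨h, hhsum, x, hx⟩ := hdep
      set g' : {i // i ∈ I} → ℝ := fun i => if hi : i ∈ T' then h ⟨i, hi⟩ else 0 with hg'
      have hg'sum : (∑ i, g' i • w i) = 0 := by
        have e1 : (∑ i, g' i • w i) = ∑ i ∈ T', g' i • w i := by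
          refine (Finset.sum_subset (Finset.subset_univ T') ?_).symm
          intro i _ hi; simp [hg', hi]
        have e2 : ∑ i ∈ T', g' i • w i = ∑ x ∈ T'.attach, g' x.1 • w x.1 :=
          (Finset.sum_attach T' (fun i => g' i • w i)).symm
        have e3 : ∑ x ∈ T'.attach, g' x.1 • w x.1 = ∑ x : {x // x ∈ T'}, h x • w x.1 := by
          rw [Finset.attach_eq_univ]
          refine Finset.sum_congr rfl ?_
          intro x _
          simp [hg', x.2]
        rw [e1, e2, e3]
        exact hhsum
      have hg'supp : (Finset.univ.filter (fun i => g' i ≠ 0)) ⊆ T' := by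
        intro i hi
        simp only [Finset.mem_filter] at hi
        by_contra hiT
        exact hi.2 (by simp [hg', hiT])
      have hlt : (Finset.univ.filter (fun i => g' i ≠ 0)).card < m₀ :=
        lt_of_le_of_lt (Finset.card_le_card hg'supp) hcardT'lt
      exact Nat.find_min hex hlt ⟨g', hg'sum, ⟨x.1, by simp [hg', x.2, hx]⟩, rfl⟩
    -- hence |T'| ≤ n
    have hkn : T'.card ≤ n := by
      have h1 := hindep.fintype_card_le_finrank
      simpa [Module.finrank_fin_fun] using h1
    have hkd : T'.card ≤ d := by
      calc T'.card ≤ Finset.univ.card := Finset.card_le_univ T'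
        _ = Fintype.card {i // i ∈ I} := rfl
        _ = I.card := Fintype.card_coe I
        _ ≤ d := by simpa using Finset.card_le_univ I
    -- enumerate T'
    set k := T'.card with hk
    set e : Fin k ≃ {x // x ∈ T'} := T'.equivFin.symm with he
    set J : Fin k → Fin d := fun l => ((e l).1 : {i // i ∈ I}).1 with hJ
    have hJinj : Function.Injective J := by
      intro l₁ l₂ hl
      apply e.injective
      exact Subtype.ext (Subtype.ext hl)
    set σ : Fin k → ℝ := fun l => s (J l) with hσ
    have hσpm : ∀ l, σ l = 1 ∨ σ l = -1 := fun l => hsI (e l).1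
    have hJne : ∀ l, J l ≠ j.1 := by
      intro l hl
      have h1 : ((e l).1 : {i // i ∈ I}) = j := Subtype.ext hl
      have hmem := (e l).2
      rw [h1] at hmem
      exact (Finset.notMem_erase j T) hmem
    -- weights
    set a : {i // i ∈ I} → ℝ := fun i => g i * s i.1 with ha
    have haj : a j ≠ 0 := mul_ne_zero hj (hsne j)
    have hasum : ∑ i, a i = 0 := key g hg0
    have haT : ∑ i ∈ T, a i = 0 := by
      rw [← hasum]
      refine Finset.sum_subset (Finset.subset_univ T) ?_
      intro i _ hi
      have h1 : g i = 0 := by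
        by_contra hgi
        exact hi (by simp [hT, hgi])
      simp [ha, h1]
    have haT' : ∑ i ∈ T', a i = -a j := by
      have h1 := Finset.add_sum_erase T a hjT
      rw [haT] at h1
      linarith [h1]
    set W : Fin k → ℝ := fun l => -(a (e l).1) / a j with hW
    have hWsum : ∑ l, W l = 1 := by
      have h1 : ∑ l, W l = ∑ x : {x // x ∈ T'}, -(a x.1) / a j :=
        Fintype.sum_equiv e _ _ (fun l => rfl)
      rw [h1, Finset.sum_coe_sort T' (fun i => -(a i) / a j)]
      rw [← Finset.sum_div, Finset.sum_neg_distrib, haT', neg_neg, div_self haj]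
    -- the affine combination equals s j • column j
    set p : Fin k → (Fin n → ℝ) := fun l => σ l • (fun m => X m (J l)) with hp
    have hmem : Finset.univ.affineCombination ℝ p W ∈ affineSpan ℝ (Set.range p) :=
      affineCombination_mem_affineSpan hWsum p
    have hcomb : Finset.univ.affineCombination ℝ p W = ∑ l, W l • p l :=
      Finset.affineCombination_eq_linear_combination _ _ _ hWsum
    have hval : ∑ l, W l • p l = s j.1 • (fun m => X m j.1) := by
      have h1 : ∑ l, W l • p l
          = ∑ x : {x // x ∈ T'}, (-(a x.1) / a j) • (s x.1.1 • w x.1) :=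
        Fintype.sum_equiv e _ _ (fun l => rfl)
      rw [h1, Finset.sum_coe_sort T' (fun i => (-(a i) / a j) • (s i.1 • w i))]
      have h2 : ∀ i ∈ T', (-(a i) / a j) • (s i.1 • w i) = ((-1:ℝ) / a j) • (g i • w i) := by
        intro i _
        rw [smul_smul, smul_smul]
        congr 1
        have hai : a i * s i.1 = g i := by
          simp only [ha]; rw [mul_assoc, hssq i, mul_one]
        calc -(a i) / a j * s i.1 = -1 / a j * (a i * s i.1) := by ring
          _ = -1 / a j * g i := by rw [hai]
      rw [Finset.sum_congr rfl h2, ← Finset.smul_sum]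
      have h3 : ∑ i ∈ T', g i • w i = -(g j • w j) := by
        have h4 : ∑ i ∈ T, g i • w i = 0 := by
          rw [← hg0]
          refine Finset.sum_subset (Finset.subset_univ T) ?_
          intro i _ hi
          have h5 : g i = 0 := by
            by_contra hgi
            exact hi (by simp [hT, hgi])
          simp [h5]
        have h6 := Finset.add_sum_erase T (fun i => g i • w i) hjT
        rw [h4] at h6
        exact eq_neg_of_add_eq_zero_right h6
      rw [h3, smul_neg, smul_smul, ← neg_smul]
      have hc : -((-1:ℝ) / a j * g j) = s j.1 := by
        have haj' : a j = g j * s j.1 := rfl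
        rw [haj']
        rw [neg_div, neg_mul, neg_neg, one_div, mul_inv, mul_comm ((g j)⁻¹) _,
          mul_assoc, inv_mul_cancel₀ hj, mul_one]
        rw [inv_eq_of_mul_eq_one_left (hssq j)]
      rw [hc]
    have hcontra := hGP k (le_min hkn hkd) J hJinj σ hσpm j.1 hJne (s j.1) (hsI j)
    rw [hcomb, hval] at hmem
    exact hcontra hmem
  refine ⟨hli, ?_⟩
  have h := hli.fintype_card_le_finrank
  simpa [Module.finrank_fin_fun, Fintype.card_coe] using h
end
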